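/- Let C = (φ₁,…,φ_N) be a sequence of vectors in {−1/√m, +1/√m}^m that forms an orthogonal array of strength t: for every r ≤ t and every choice of r coordinate positions, the projection of a uniformly random element of C onto those positions is uniformly distributed over {−1/√m, +1/√m}^r. Let l be an even integer with 2 ≤ l ≤ t, let δ > 0 and ε ∈ (0,1), and suppose m ≥ (3/4)·l·(k/δ)²·(k/ε)^{2/l}. Then the m×N matrix Φ with columns φ₁,…,φ_N is (k,δ,ε)-StRIP. -/

import Mathlib

open Finset Matrix

open scoped Classical

noncomputable section

/-- The ℓ₂→ℓ₂ operator (spectral) norm of a real matrix. -/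
def specNorm {α β : Type*} [Fintype α] [Fintype β] (A : Matrix α β ℝ) : ℝ :=
  sSup {t : ℝ | ∃ x : β → ℝ, (∑ j, x j ^ 2) ≤ 1 ∧ t = Real.sqrt (∑ i, (∑ j, A i j * x j) ^ 2)}

variable {m N : ℕ}

/-- The submatrix of `Φ` formed by the columns indexed by `I`. -/
def colSub (Φ : Matrix (Fin m) (Fin N) ℝ) (I : Finset (Fin N)) :
    Matrix (Fin m) {i // i ∈ I} ℝ :=
  Matrix.of fun r j => Φ r (j : Fin N)

/-- The Gram matrix `Φ_Iᵀ Φ_I`. -/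
def gram (Φ : Matrix (Fin m) (Fin N) ℝ) (I : Finset (Fin N)) :
    Matrix {i // i ∈ I} {i // i ∈ I} ℝ :=
  (colSub Φ I)ᵀ * colSub Φ I

/-- `‖Φ_Iᵀ φ_i‖₂²`. -/
def sincSq (Φ : Matrix (Fin m) (Fin N) ℝ) (I : Finset (Fin N)) (i : Fin N) : ℝ :=
  ∑ j ∈ I, (∑ r, Φ r j * Φ r i) ^ 2

/-- All columns of `Φ` have unit ℓ₂ norm. -/
def unitCols (Φ : Matrix (Fin m) (Fin N) ℝ) : Prop :=
  ∀ j, (∑ r, Φ r j ^ 2) = 1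

/-- `Φ` is `(k,δ,ε)`-StRIP: a uniformly random `k`-subset `I` satisfies
`‖Φ_Iᵀ Φ_I − Id‖ ≤ δ` with probability at least `1 − ε`. -/
def StRIP (Φ : Matrix (Fin m) (Fin N) ℝ) (k : ℕ) (δ ε : ℝ) : Prop :=
  (1 - ε) * ((Finset.powersetCard k (univ : Finset (Fin N))).card : ℝ) ≤
    (((Finset.powersetCard k (univ : Finset (Fin N))).filter
        fun I => specNorm (gram Φ I - 1) ≤ δ).card : ℝ)

/-- `Φ` is `(k,α,ε)`-SINC: a uniformly random `k`-subset `I` satisfies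
`max_{i ∉ I} ‖Φ_Iᵀ φ_i‖₂² ≤ α` with probability at least `1 − ε`. -/
def SINC (Φ : Matrix (Fin m) (Fin N) ℝ) (k : ℕ) (α ε : ℝ) : Prop :=
  (1 - ε) * ((Finset.powersetCard k (univ : Finset (Fin N))).card : ℝ) ≤
    (((Finset.powersetCard k (univ : Finset (Fin N))).filter
        fun I => ∀ i ∉ I, sincSq Φ I i ≤ α).card : ℝ)

/-- ℓ₁ norm on `ℝ^N`. -/
def l1 (x : Fin N → ℝ) : ℝ := ∑ i, |x i|

/-- ℓ₂ norm on `ℝ^N`. -/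
def l2 (x : Fin N → ℝ) : ℝ := Real.sqrt (∑ i, x i ^ 2)

/-- Restriction `x_I` of a vector to the coordinates in `I` (zero outside `I`). -/
def restr (I : Finset (Fin N)) (x : Fin N → ℝ) : Fin N → ℝ :=
  fun i => if i ∈ I then x i else 0

/-- `x` is `k`-sparse. -/
def kSparse (k : ℕ) (x : Fin N → ℝ) : Prop :=
  ((univ : Finset (Fin N)).filter fun i => x i ≠ 0).card ≤ k

/-- `min_{x' k-sparse} ‖x − x′‖₁`. -/
def bestK (k : ℕ) (x : Fin N → ℝ) : ℝ :=
  sInf {t : ℝ | ∃ x' : Fin N → ℝ, kSparse k x' ∧ t = l1 (x - x')}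

/-- `xh` is a (noiseless) Basis Pursuit solution for the data `y`. -/
def isBPsol (Φ : Matrix (Fin m) (Fin N) ℝ) (y : Fin m → ℝ) (xh : Fin N → ℝ) : Prop :=
  Φ.mulVec xh = y ∧ ∀ u : Fin N → ℝ, Φ.mulVec u = y → l1 xh ≤ l1 u


/-!
Write `R_i(I) = ∑_{j ∈ I, j ≠ i} |⟨φ_i, φ_j⟩|` for the off-diagonal row sums of
`Φ_Iᵀ Φ_I − Id`. By the Schur test its spectral norm is at most `max_i R_i(I)`, so `I` is good as
soon as `∑_{i ∈ I} R_i(I)^l < δ^l`, and by Markov's inequality it suffices to bound the sum of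
this quantity over all `k`-subsets. Jensen gives `R_i(I)^l ≤ k^(l-1) ∑_{j ∈ I, j ≠ i} ⟨φ_i, φ_j⟩^l`,
and a pair `i ≠ j` lies in at most a fraction `(k/N)²` of the `k`-subsets.

For `l = 2n ≤ t`, expand `⟨φ_i, φ_j⟩^l` as a sum over words `f : Fin l → rows` and sum over `i`:
by the orthogonal-array property every word in which some row occurs an odd number of times
contributes zero. At most `n^n m^n` words remain, each contributing at most `N / m^l`, so
`∑_i ⟨φ_i, φ_j⟩^l ≤ N n^n / m^n`. The assumed bound on `m` is exactly what makes
`k^(l+1) n^n / m^n ≤ ε δ^l`.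
-/

theorem specNorm_le_of_sum_abs_le {α β : Type*} [Fintype α] [Fintype β] (A : Matrix α β ℝ)
    {δ : ℝ} (hδ : 0 ≤ δ) (hrow : ∀ i, ∑ j, |A i j| ≤ δ) (hcol : ∀ j, ∑ i, |A i j| ≤ δ) :
    specNorm A ≤ δ := by
  refine Real.sSup_le (fun _ ⟨x, hx, hval⟩ => hval ▸ ?_) hδ
  rw [Real.sqrt_le_left hδ]
  -- weighted Cauchy–Schwarz with weights `|A i j|`, then the column bound
  have hrow_sq : ∀ i, (∑ j, A i j * x j) ^ 2 ≤ δ * ∑ j, |A i j| * x j ^ 2 := fun i =>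
    calc (∑ j, A i j * x j) ^ 2 = |∑ j, A i j * x j| ^ 2 := (sq_abs _).symm
      _ ≤ (∑ j, |A i j| * |x j|) ^ 2 := by
          gcongr
          simpa only [abs_mul] using Finset.abs_sum_le_sum_abs (fun j => A i j * x j) univ
      _ ≤ (∑ j, |A i j|) * ∑ j, |A i j| * x j ^ 2 :=
          sum_sq_le_sum_mul_sum_of_sq_le_mul _ (fun _ _ => abs_nonneg _)
            (fun _ _ => by positivity) (fun _ _ => le_of_eq <| by
              rw [mul_pow, sq_abs, sq_abs, ← mul_assoc, abs_mul_abs_self, sq])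
      _ ≤ δ * ∑ j, |A i j| * x j ^ 2 := by gcongr; exact hrow i
  calc ∑ i, (∑ j, A i j * x j) ^ 2 ≤ ∑ i, δ * ∑ j, |A i j| * x j ^ 2 :=
        sum_le_sum fun i _ => hrow_sq i
    _ = δ * ∑ j, (∑ i, |A i j|) * x j ^ 2 := by
        rw [← mul_sum, sum_comm]; simp_rw [sum_mul]
    _ ≤ δ * ∑ j, δ * x j ^ 2 := by gcongr with j; exact hcol j
    _ ≤ δ ^ 2 := by
        rw [← mul_sum, ← mul_assoc, ← sq]; exact mul_le_of_le_one_right (sq_nonneg δ) hx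

def gramRadius (Φ : Matrix (Fin m) (Fin N) ℝ) (I : Finset (Fin N)) (i : Fin N) : ℝ :=
  ∑ j ∈ I.erase i, |(Φᵀ * Φ) i j|

theorem gramRadius_nonneg (Φ : Matrix (Fin m) (Fin N) ℝ) (I : Finset (Fin N)) (i : Fin N) :
    0 ≤ gramRadius Φ I i :=
  sum_nonneg fun _ _ => abs_nonneg _

theorem gram_apply (Φ : Matrix (Fin m) (Fin N) ℝ) (I : Finset (Fin N)) (a b : {i // i ∈ I}) :
    gram Φ I a b = (Φᵀ * Φ) a b := by
  simp [_root_.gram, colSub, mul_apply]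

theorem specNorm_gram_sub_one_le {Φ : Matrix (Fin m) (Fin N) ℝ} (hΦ : unitCols Φ)
    {I : Finset (Fin N)} {δ : ℝ} (hδ : 0 ≤ δ) (hI : ∀ i ∈ I, gramRadius Φ I i ≤ δ) :
    specNorm (gram Φ I - 1) ≤ δ := by
  have hentry : ∀ a b : {i // i ∈ I},
      |(gram Φ I - 1) a b| = if (a : Fin N) = b then 0 else |(Φᵀ * Φ) a b| := by
    intro a b
    split_ifs with hab
    · rw [Subtype.ext hab, Matrix.sub_apply, gram_apply, one_apply_eq, ← hΦ b]
      simp [mul_apply, sq]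
    · rw [Matrix.sub_apply, gram_apply, one_apply_ne (fun h => hab (congrArg Subtype.val h)),
        sub_zero]
  have hrow : ∀ a : {i // i ∈ I}, ∑ b, |(gram Φ I - 1) a b| ≤ δ := by
    intro a
    simp_rw [hentry]
    rw [Finset.sum_coe_sort I (fun j => if (a : Fin N) = j then 0 else |(Φᵀ * Φ) a j|),
      ← Finset.sum_erase I (f := fun j => if (a : Fin N) = j then 0 else |(Φᵀ * Φ) a j|)
        (if_pos rfl)]
    exact le_of_eq_of_le (sum_congr rfl fun j hj => if_neg (ne_of_mem_erase hj).symm) (hI a a.2)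
  have hsymm : (gram Φ I - 1).IsSymm :=
    IsSymm.sub (by simp [IsSymm, _root_.gram]) isSymm_one
  exact specNorm_le_of_sum_abs_le _ hδ hrow fun b => by simpa only [hsymm.apply] using hrow b

theorem specNorm_gram_sub_one_le_of_sum_pow_lt {Φ : Matrix (Fin m) (Fin N) ℝ} (hΦ : unitCols Φ)
    {I : Finset (Fin N)} {δ : ℝ} (hδ : 0 ≤ δ) {l : ℕ} (hl : l ≠ 0)
    (hI : ∑ i ∈ I, gramRadius Φ I i ^ l < δ ^ l) : specNorm (gram Φ I - 1) ≤ δ :=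
  specNorm_gram_sub_one_le hΦ hδ fun i hi =>
    (pow_lt_pow_iff_left₀ (gramRadius_nonneg Φ I i) hδ hl).1
      ((single_le_sum (fun j _ => pow_nonneg (gramRadius_nonneg Φ I j) l) hi).trans_lt hI) |>.le

def IsEvenFibered {α : Type*} [DecidableEq α] {l : ℕ} (f : Fin l → α) : Prop :=
  ∀ a, Even #{s | f s = a}

theorem card_isEvenFibered_succ_succ_le (α : Type*) [Fintype α] [DecidableEq α] (l : ℕ) :
    #{f : Fin (l + 2) → α | IsEvenFibered f} ≤
      (l + 1) * Fintype.card α * #{g : Fin l → α | IsEvenFibered g} := by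
  -- the first letter recurs at some position `y.succ`; deleting both occurrences keeps all
  -- fibers even, and `(y, f 0, g)` determines `f`
  let F : Fin (l + 1) × α × (Fin l → α) → Fin (l + 2) → α :=
    fun x => Fin.cons x.2.1 (Fin.insertNth x.1 x.2.1 x.2.2)
  let S := (univ : Finset (Fin (l + 1))) ×ˢ (univ : Finset α) ×ˢ
    (univ.filter fun g : Fin l → α => IsEvenFibered g)
  refine (card_le_card (t := S.image F) fun f hf => ?_).trans
    (card_image_le.trans (by simp [S, card_product, mul_assoc]))
  have hf : IsEvenFibered f := (mem_filter.1 hf).2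
  obtain ⟨y, hy⟩ : ∃ y : Fin (l + 1), f y.succ = f 0 := by
    have h := hf (f 0)
    rw [Fin.card_filter_univ_succ', if_pos rfl] at h
    obtain ⟨y, hy⟩ := card_pos.1 (Nat.pos_of_ne_zero fun h0 => by
      rw [h0] at h; exact Nat.not_even_one h)
    exact ⟨y, (mem_filter.1 hy).2⟩
  let g := Fin.removeNth y (Fin.tail f)
  have hcount : ∀ a, #{s | f s = a} = 2 * (if f 0 = a then 1 else 0) + #{s | g s = a} := by
    intro a
    simp only [card_filter, Fin.sum_univ_succ (n := l + 1), Fin.sum_univ_succAbove _ y]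
    rw [hy]
    simp only [g, Fin.removeNth, Fin.tail]
    ring
  refine mem_image.2 ⟨(y, f 0, g), ?_, ?_⟩
  · simp only [S, mem_product, mem_univ, true_and, mem_filter]
    intro a
    have h := hf a
    rw [hcount a] at h
    exact (Nat.even_add.1 h).1 (even_two_mul _)
  · simp only [F, g, Fin.insertNth_removeNth]
    rw [Function.update_eq_self_iff.2 hy.symm, Fin.cons_self_tail]

theorem card_isEvenFibered_le (α : Type*) [Fintype α] [DecidableEq α] (n : ℕ) :
    #{f : Fin (2 * n) → α | IsEvenFibered f} ≤ n ^ n * Fintype.card α ^ n := by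
  induction n with
  | zero => simpa using card_le_one_of_subsingleton _
  | succ n ih =>
    have hbern : (2 * n + 1) * n ^ n ≤ (n + 1) ^ (n + 1) := by
      have := pow_add_mul_le_add_pow (a := n) (b := 1) (Nat.zero_le n) (Nat.zero_le _) (n + 1)
      rw [Nat.add_sub_cancel, mul_one, Nat.cast_id] at this
      linarith [pow_succ n n]
    calc #{f : Fin (2 * (n + 1)) → α | IsEvenFibered f}
        ≤ (2 * n + 1) * Fintype.card α * #{g : Fin (2 * n) → α | IsEvenFibered g} :=
          card_isEvenFibered_succ_succ_le α (2 * n)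
      _ ≤ (2 * n + 1) * Fintype.card α * (n ^ n * Fintype.card α ^ n) := by gcongr
      _ = (2 * n + 1) * n ^ n * Fintype.card α ^ (n + 1) := by ring
      _ ≤ (n + 1) ^ (n + 1) * Fintype.card α ^ (n + 1) := by gcongr

def HasSignEntries (Φ : Matrix (Fin m) (Fin N) ℝ) : Prop :=
  ∀ r j, Φ r j = 1 / Real.sqrt m ∨ Φ r j = -(1 / Real.sqrt m)

def IsOrthArray (Φ : Matrix (Fin m) (Fin N) ℝ) (t : ℕ) : Prop :=
  ∀ r : ℕ, r ≤ t → ∀ p : Fin r → Fin m, Function.Injective p →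
    ∀ v : Fin r → ℝ, (∀ s, v s = 1 / Real.sqrt m ∨ v s = -(1 / Real.sqrt m)) →
    (((univ : Finset (Fin N)).filter fun j => ∀ s, Φ (p s) j = v s).card) * 2 ^ r = N

namespace HasSignEntries

variable {Φ : Matrix (Fin m) (Fin N) ℝ}

theorem abs_mul_apply (hΦ : HasSignEntries Φ) (r i j) : |Φ r i * Φ r j| = 1 / m := by
  have habs : ∀ i, |Φ r i| = 1 / Real.sqrt m := fun i => by
    rcases hΦ r i with h | h <;> simp [h]
  rw [abs_mul, habs, habs, one_div_mul_one_div, Real.mul_self_sqrt (Nat.cast_nonneg m)]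

theorem unitCols (hΦ : HasSignEntries Φ) (hm : 0 < m) : _root_.unitCols Φ := fun j => by
  have hsq : ∀ r, Φ r j ^ 2 = 1 / m := fun r => by
    rw [sq, ← abs_mul_self, hΦ.abs_mul_apply]
  simp [hsq, hm.ne']

end HasSignEntries

namespace IsOrthArray

variable {Φ : Matrix (Fin m) (Fin N) ℝ} {t : ℕ}

theorem card_filter_mul_two_pow (hOA : IsOrthArray Φ t) {ι : Type*} [Fintype ι]
    (hι : Fintype.card ι ≤ t) {p : ι → Fin m} (hp : Function.Injective p) {v : ι → ℝ}
    (hv : ∀ s, v s = 1 / Real.sqrt m ∨ v s = -(1 / Real.sqrt m)) :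
    #{j | ∀ s, Φ (p s) j = v s} * 2 ^ Fintype.card ι = N := by
  let e := (Fintype.equivFin ι).symm
  have h := hOA _ hι (p ∘ e) (hp.comp e.injective) (v ∘ e) fun s => hv (e s)
  simp only [Function.comp_apply] at h
  rwa [filter_congr fun j _ => e.forall_congr_right (q := fun s => Φ (p s) j = v s)] at h

/-- The columns of `Φ`, restricted to at most `t` rows, are uniformly distributed over the sign
patterns. -/
theorem two_pow_mul_sum_eq (hOA : IsOrthArray Φ t) (hΦ : HasSignEntries Φ) {R : Finset (Fin m)}
    (hR : #R ≤ t) (F : (R → ℝ) → ℝ) :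
    2 ^ #R * ∑ j, F (fun r => Φ r j) =
      N * ∑ v ∈ Fintype.piFinset fun _ : R => {1 / Real.sqrt m, -(1 / Real.sqrt m)}, F v := by
  have hmaps : ∀ j ∈ (univ : Finset (Fin N)), (fun r : R => Φ r j) ∈
      Fintype.piFinset fun _ : R => {1 / Real.sqrt m, -(1 / Real.sqrt m)} := fun j _ =>
    Fintype.mem_piFinset.2 fun r => by simpa using hΦ r j
  rw [← sum_fiberwise_of_maps_to hmaps, mul_sum, mul_sum]
  refine sum_congr rfl fun v hv => ?_
  rw [sum_congr rfl fun j hj => congrArg F (mem_filter.1 hj).2, sum_const, nsmul_eq_mul,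
    ← mul_assoc]
  congr 1
  have hcard := hOA.card_filter_mul_two_pow (by simpa using hR) Subtype.val_injective (v := v)
    fun r => by simpa using Fintype.mem_piFinset.1 hv r
  have hfiber : #{j | (fun r : R => Φ r j) = v} = #{j | ∀ r : R, Φ r j = v r} := by
    simp only [funext_iff]
  rw [hfiber, ← Fintype.card_coe R]
  exact_mod_cast (mul_comm _ _).trans hcard

theorem sum_prod_pow_eq_zero (hOA : IsOrthArray Φ t) (hΦ : HasSignEntries Φ) (hm : 0 < m)
    {R : Finset (Fin m)} (hR : #R ≤ t) (e : Fin m → ℕ) {r₀ : Fin m} (hr₀ : r₀ ∈ R)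
    (hodd : Odd (e r₀)) : ∑ j, ∏ r ∈ R, Φ r j ^ e r = 0 := by
  have ha : 1 / Real.sqrt m ≠ -(1 / Real.sqrt m) :=
    (neg_lt_self (by positivity)).ne'
  have key := hOA.two_pow_mul_sum_eq hΦ hR fun v => ∏ r : R, v r ^ e r
  rw [← prod_univ_sum (fun _ => {1 / Real.sqrt m, -(1 / Real.sqrt m)}) fun (r : R) x => x ^ e r,
    prod_eq_zero (mem_univ ⟨r₀, hr₀⟩) (by rw [sum_pair ha, hodd.neg_pow, add_neg_cancel]),
    mul_zero] at key
  rw [sum_congr rfl fun j _ => (prod_coe_sort R fun r => Φ r j ^ e r).symm]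
  exact (mul_eq_zero.1 key).resolve_left (by positivity)

theorem sum_prod_eq_zero (hOA : IsOrthArray Φ t) (hΦ : HasSignEntries Φ) (hm : 0 < m) {l : ℕ}
    (hl : l ≤ t) {f : Fin l → Fin m} (hf : ¬ IsEvenFibered f) : ∑ j, ∏ s, Φ (f s) j = 0 := by
  obtain ⟨r₀, hr₀⟩ := not_forall.1 hf
  rw [Nat.not_even_iff_odd] at hr₀
  obtain ⟨s₀, hs₀⟩ := card_pos.1 hr₀.pos
  rw [sum_congr rfl fun j _ => prod_comp (fun r => Φ r j) f]
  exact hOA.sum_prod_pow_eq_zero hΦ hm (card_image_le.trans (by simpa using hl)) _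
    (mem_image.2 ⟨s₀, mem_univ _, (mem_filter.1 hs₀).2⟩) hr₀

theorem sum_gram_pow_le (hOA : IsOrthArray Φ t) (hΦ : HasSignEntries Φ) (hm : 0 < m) {n : ℕ}
    (hn : 2 * n ≤ t) (j : Fin N) : ∑ i, (Φᵀ * Φ) i j ^ (2 * n) ≤ N * n ^ n / m ^ n := by
  have hexpand : ∑ i, (Φᵀ * Φ) i j ^ (2 * n) =
      ∑ f : Fin (2 * n) → Fin m, ∑ i, ∏ s, Φ (f s) i * Φ (f s) j := by
    simp_rw [mul_apply, transpose_apply, Fintype.sum_pow]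
    exact sum_comm
  have hodd : ∀ f : Fin (2 * n) → Fin m, ¬ IsEvenFibered f →
      ∑ i, ∏ s, Φ (f s) i * Φ (f s) j = 0 := fun f hf => by
    simp_rw [prod_mul_distrib, ← sum_mul, hOA.sum_prod_eq_zero hΦ hm hn hf, zero_mul]
  have hterm : ∀ f : Fin (2 * n) → Fin m,
      ∑ i, ∏ s, Φ (f s) i * Φ (f s) j ≤ N * (1 / m) ^ (2 * n) := fun f =>
    calc _ ≤ ∑ i, |∏ s, Φ (f s) i * Φ (f s) j| := sum_le_sum fun i _ => le_abs_self _
      _ = N * (1 / m) ^ (2 * n) := by simp [abs_prod, hΦ.abs_mul_apply]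
  have hcard : (#{f : Fin (2 * n) → Fin m | IsEvenFibered f} : ℝ) ≤ n ^ n * m ^ n := by
    exact_mod_cast (card_isEvenFibered_le (Fin m) n).trans_eq (by rw [Fintype.card_fin])
  rw [hexpand, ← sum_filter_of_ne fun f _ h => not_not.1 (mt (hodd f) h)]
  calc _ ≤ #{f : Fin (2 * n) → Fin m | IsEvenFibered f} • (N * (1 / m) ^ (2 * n) : ℝ) :=
        sum_le_card_nsmul _ _ _ fun f _ => hterm f
    _ ≤ (n ^ n * m ^ n) * (N * (1 / m) ^ (2 * n)) := by
        rw [nsmul_eq_mul]; gcongr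
    _ = N * n ^ n / m ^ n := by
        have : (m : ℝ) ≠ 0 := by positivity
        rw [_root_.one_div_pow, pow_mul']
        field_simp

end IsOrthArray

theorem Nat.choose_mul_sq_le (n k : ℕ) :
    n.choose k * (n + 2) ^ 2 ≤ (n + 2).choose (k + 2) * (k + 2) ^ 2 := by
  rcases lt_or_ge n k with hnk | hkn
  · simp [Nat.choose_eq_zero_of_lt hnk]
  have h₁ : (n + 2) * (n + 1).choose (k + 1) = (n + 2).choose (k + 2) * (k + 2) :=
    Nat.add_one_mul_choose_eq (n + 1) (k + 1)
  have h₂ := Nat.add_one_mul_choose_eq n k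
  refine Nat.le_of_mul_le_mul_right (c := k + 1) ?_ k.succ_pos
  calc n.choose k * (n + 2) ^ 2 * (k + 1) = (n + 2) * (n.choose k * ((n + 2) * (k + 1))) := by ring
    _ ≤ (n + 2) * (n.choose k * ((n + 1) * (k + 2))) :=
        Nat.mul_le_mul_left _ (Nat.mul_le_mul_left _ (by nlinarith))
    _ = (k + 2) * (n + 2) * ((n + 1) * n.choose k) := by ring
    _ = (k + 2) * (k + 1) * ((n + 2) * (n + 1).choose (k + 1)) := by rw [h₂]; ring
    _ = (n + 2).choose (k + 2) * (k + 2) ^ 2 * (k + 1) := by rw [h₁]; ring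

theorem card_filter_mem_mem_mul_sq_le {N : ℕ} (k : ℕ) {i j : Fin N} (hij : i ≠ j) :
    #{I ∈ powersetCard k (univ : Finset (Fin N)) | i ∈ I ∧ j ∈ I} * N ^ 2 ≤ N.choose k * k ^ 2 := by
  rcases lt_or_ge k 2 with hk | hk
  · have hempty : {I ∈ powersetCard k (univ : Finset (Fin N)) | i ∈ I ∧ j ∈ I} = ∅ := by
      refine filter_false_of_mem fun I hI ⟨hi, hj⟩ => ?_
      have := card_le_card (insert_subset hi (singleton_subset_iff.2 hj))
      rw [card_pair hij, (mem_powersetCard.1 hI).2] at this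
      omega
    simp [hempty]
  obtain ⟨k, rfl⟩ := Nat.exists_eq_add_of_le' hk
  obtain ⟨N, rfl⟩ := Nat.exists_eq_add_of_le'
    (Fintype.card_fin N ▸ Fintype.one_lt_card_iff.2 ⟨i, j, hij⟩ : 2 ≤ N)
  have hsub : {I ∈ powersetCard (k + 2) (univ : Finset (Fin (N + 2))) | i ∈ I ∧ j ∈ I} ⊆
      (powersetCard k ((univ.erase i).erase j)).image fun J => insert i (insert j J) := by
    intro I hI
    obtain ⟨hI, hi, hj⟩ := mem_filter.1 hI
    refine mem_image.2 ⟨(I.erase i).erase j, mem_powersetCard.2 ⟨?_, ?_⟩, ?_⟩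
    · exact erase_subset_erase _ (erase_subset_erase _ (subset_univ _))
    · rw [card_erase_of_mem (mem_erase.2 ⟨hij.symm, hj⟩), card_erase_of_mem hi,
        (mem_powersetCard.1 hI).2]
      rfl
    · rw [insert_erase (mem_erase.2 ⟨hij.symm, hj⟩), insert_erase hi]
  have hcard : #(((univ : Finset (Fin (N + 2))).erase i).erase j) = N := by
    rw [card_erase_of_mem (mem_erase.2 ⟨hij.symm, mem_univ _⟩), card_erase_of_mem (mem_univ _),
      card_univ, Fintype.card_fin]
    rfl
  calc _ ≤ N.choose k * (N + 2) ^ 2 := by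
        gcongr
        refine (card_le_card hsub).trans (card_image_le.trans ?_)
        rw [card_powersetCard, hcard]
    _ ≤ (N + 2).choose (k + 2) * (k + 2) ^ 2 := Nat.choose_mul_sq_le N k

theorem sum_powersetCard_sum_sum_erase_le {N : ℕ} (k : ℕ) {g : Fin N → Fin N → ℝ}
    (hg : ∀ i j, 0 ≤ g i j) :
    ∑ I ∈ powersetCard k (univ : Finset (Fin N)), ∑ i ∈ I, ∑ j ∈ I.erase i, g i j ≤
      N.choose k * ((k : ℝ) / N) ^ 2 * ∑ i, ∑ j, g i j := by
  have hcount : ∀ i j : Fin N, i ≠ j →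
      (#{I ∈ powersetCard k univ | i ∈ I ∧ j ∈ I} : ℝ) ≤ N.choose k * ((k : ℝ) / N) ^ 2 := by
    intro i j hij
    have hN : (0 : ℝ) < N := by exact_mod_cast i.pos
    rw [div_pow, mul_div_assoc', le_div_iff₀ (by positivity)]
    exact_mod_cast card_filter_mem_mem_mul_sq_le k hij
  rw [sum_congr rfl fun I _ => sum_sigma' I (fun i => I.erase i) g,
    sum_comm' (t' := univ.sigma fun i => univ.erase i)
      (s' := fun x => {I ∈ powersetCard k univ | x.1 ∈ I ∧ x.2 ∈ I}) fun I x => by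
        simp only [mem_sigma, mem_erase, mem_filter, mem_univ, true_and, and_true]; tauto]
  calc _ = ∑ x ∈ univ.sigma fun i => univ.erase i,
        (#{I ∈ powersetCard k univ | x.1 ∈ I ∧ x.2 ∈ I} : ℝ) * g x.1 x.2 := by
        simp only [sum_const, nsmul_eq_mul]
    _ ≤ ∑ x ∈ univ.sigma fun i => univ.erase i, N.choose k * ((k : ℝ) / N) ^ 2 * g x.1 x.2 := by
        refine sum_le_sum fun x hx => mul_le_mul_of_nonneg_right ?_ (hg _ _)
        exact hcount _ _ (ne_of_mem_erase (mem_sigma.1 hx).2).symm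
    _ ≤ N.choose k * ((k : ℝ) / N) ^ 2 * ∑ i, ∑ j, g i j := by
        rw [← mul_sum, ← sum_sigma']
        gcongr with i
        exacts [fun j _ _ => hg i j, erase_subset i univ]

theorem sum_pow_sum_erase_le {α : Type*} [DecidableEq α] (I : Finset α) {g : α → α → ℝ}
    (hg : ∀ i j, 0 ≤ g i j) (p : ℕ) :
    ∑ i ∈ I, (∑ j ∈ I.erase i, g i j) ^ (p + 1) ≤
      (#I : ℝ) ^ p * ∑ i ∈ I, ∑ j ∈ I.erase i, g i j ^ (p + 1) := by
  rw [mul_sum]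
  refine sum_le_sum fun i _ => (pow_sum_le_card_mul_sum_pow (fun j _ => hg i j) p).trans ?_
  gcongr
  · exact sum_nonneg fun j _ => pow_nonneg (hg i j) _
  · exact erase_subset i I

theorem one_sub_mul_card_le_card_filter_lt {ι : Type*} (s : Finset ι) {g : ι → ℝ}
    (hg : ∀ i ∈ s, 0 ≤ g i) {c ε : ℝ} (hc : 0 < c) (hsum : ∑ i ∈ s, g i ≤ ε * c * #s) :
    (1 - ε) * #s ≤ #{i ∈ s | g i < c} := by
  have hbad : (#{i ∈ s | ¬ g i < c} : ℝ) * c ≤ ε * c * #s :=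
    calc (#{i ∈ s | ¬ g i < c} : ℝ) * c ≤ ∑ i ∈ s with ¬ g i < c, g i := by
          rw [← nsmul_eq_mul]
          exact card_nsmul_le_sum _ _ _ fun i hi => not_lt.1 (mem_filter.1 hi).2
      _ ≤ ∑ i ∈ s, g i := sum_le_sum_of_subset_of_nonneg (filter_subset _ _) fun i hi _ => hg i hi
      _ ≤ ε * c * #s := hsum
  have hsplit : (#{i ∈ s | g i < c} : ℝ) + #{i ∈ s | ¬ g i < c} = #s := by
    exact_mod_cast card_filter_add_card_filter_not _
  nlinarith

def rowsBound (l k : ℕ) (δ ε : ℝ) : ℝ :=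
  (3 / 4 : ℝ) * l * ((k : ℝ) / δ) ^ 2 * ((k : ℝ) / ε) ^ ((2 : ℝ) / l)

theorem rowsBound_pos {l k : ℕ} {δ ε : ℝ} (hl : 0 < l) (hk : 0 < k) (hδ : 0 < δ) (hε : 0 < ε) :
    0 < rowsBound l k δ ε := by
  unfold rowsBound
  have : (0 : ℝ) < k := by exact_mod_cast hk
  have : (0 : ℝ) < l := by exact_mod_cast hl
  positivity

theorem pow_mul_pow_div_pow_le_of_rowsBound_le {n k : ℕ} {δ ε M : ℝ} (hn : 0 < n) (hk : 0 < k)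
    (hδ : 0 < δ) (hε : 0 < ε) (hM : rowsBound (2 * n) k δ ε ≤ M) :
    (k : ℝ) ^ (2 * n + 1) * n ^ n / M ^ n ≤ ε * δ ^ (2 * n) := by
  have hB := rowsBound_pos (l := 2 * n) (by omega) hk hδ hε
  have hkε : (0 : ℝ) < k / ε := div_pos (by exact_mod_cast hk) hε
  -- the exponent `2 / l` in the bound is chosen so that its `n`-th power is exactly `k / ε`
  have hpow : rowsBound (2 * n) k δ ε ^ n =
      (3 / 2 * n : ℝ) ^ n * ((k : ℝ) / δ) ^ (2 * n) * (k / ε) := by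
    unfold rowsBound
    rw [mul_pow, mul_pow, ← pow_mul, ← Real.rpow_natCast (_ ^ _), ← Real.rpow_mul hkε.le]
    have : (2 : ℝ) / ((2 * n : ℕ) : ℝ) * n = 1 := by push_cast; field_simp
    rw [this, Real.rpow_one]
    push_cast; ring
  rw [div_le_iff₀ (pow_pos (hB.trans_le hM) n)]
  calc (k : ℝ) ^ (2 * n + 1) * n ^ n ≤ (k : ℝ) ^ (2 * n + 1) * (3 / 2 * n) ^ n := by
        gcongr; linarith
    _ = ε * δ ^ (2 * n) * rowsBound (2 * n) k δ ε ^ n := by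
        rw [hpow, div_pow]; field_simp; ring
    _ ≤ ε * δ ^ (2 * n) * M ^ n := by gcongr

theorem IsOrthArray.sum_powersetCard_sum_gramRadius_pow_le {Φ : Matrix (Fin m) (Fin N) ℝ}
    {t : ℕ} (hOA : IsOrthArray Φ t) (hΦ : HasSignEntries Φ) (hm : 0 < m) {n : ℕ} (hn : 0 < n)
    (hnt : 2 * n ≤ t) (k : ℕ) :
    ∑ I ∈ powersetCard k (univ : Finset (Fin N)), ∑ i ∈ I, gramRadius Φ I i ^ (2 * n) ≤
      N.choose k * ((k : ℝ) ^ (2 * n + 1) * n ^ n / m ^ n) := by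
  obtain ⟨p, hp⟩ : ∃ p, 2 * n = p + 1 := ⟨2 * n - 1, by omega⟩
  have hpow_nonneg : ∀ x : ℝ, 0 ≤ x ^ (2 * n) := (even_two_mul n).pow_nonneg
  calc ∑ I ∈ powersetCard k univ, ∑ i ∈ I, gramRadius Φ I i ^ (2 * n)
      ≤ ∑ I ∈ powersetCard k univ,
          (k : ℝ) ^ p * ∑ i ∈ I, ∑ j ∈ I.erase i, (Φᵀ * Φ) i j ^ (2 * n) := by
        refine sum_le_sum fun I hI => ?_
        have h := sum_pow_sum_erase_le I (fun i j => abs_nonneg ((Φᵀ * Φ) i j)) p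
        rw [← hp, (mem_powersetCard.1 hI).2] at h
        simpa only [gramRadius, (even_two_mul n).pow_abs] using h
    _ ≤ (k : ℝ) ^ p * (N.choose k * ((k : ℝ) / N) ^ 2 * ∑ i, ∑ j, (Φᵀ * Φ) i j ^ (2 * n)) := by
        rw [← mul_sum]
        gcongr
        exact sum_powersetCard_sum_sum_erase_le k fun i j => hpow_nonneg _
    _ ≤ (k : ℝ) ^ p * (N.choose k * ((k : ℝ) / N) ^ 2 * (N * (N * n ^ n / m ^ n))) := by
        gcongr
        rw [sum_comm]
        calc _ ≤ ∑ _j : Fin N, (N * n ^ n / m ^ n : ℝ) :=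
              sum_le_sum fun j _ => hOA.sum_gram_pow_le hΦ hm hnt j
          _ = _ := by simp
    _ ≤ N.choose k * ((k : ℝ) ^ (2 * n + 1) * n ^ n / m ^ n) := by
        rcases N.eq_zero_or_pos with rfl | hN
        · simp only [CharP.cast_eq_zero, zero_mul, mul_zero]
          positivity
        · have : (N : ℝ) ≠ 0 := by positivity
          refine le_of_eq ?_
          rw [hp]
          field_simp
          ring

theorem stRIP_zero (Φ : Matrix (Fin m) (Fin N) ℝ) {δ ε : ℝ} (hδ : 0 ≤ δ) (hε : 0 ≤ ε) :
    StRIP Φ 0 δ ε := by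
  have hempty : specNorm (gram Φ ∅ - 1) ≤ δ :=
    specNorm_le_of_sum_abs_le _ hδ (fun i => (notMem_empty _ i.2).elim)
      fun j => (notMem_empty _ j.2).elim
  unfold StRIP
  rw [powersetCard_zero, filter_true_of_mem fun I hI => (mem_singleton.1 hI) ▸ hempty]
  exact mul_le_of_le_one_left (Nat.cast_nonneg _) (by linarith)

theorem stmt17_general (m N k t : ℕ)
    (Φ : Matrix (Fin m) (Fin N) ℝ)
    -- the columns have entries `±1/√m`
    (hentries : ∀ r j, Φ r j = 1 / Real.sqrt m ∨ Φ r j = -(1 / Real.sqrt m))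
    -- the columns form an orthogonal array of strength `t`: for every `r ≤ t`
    -- coordinate positions, the projection of a uniformly random column onto those
    -- positions is uniform on `{±1/√m}^r`
    (hOA : ∀ r : ℕ, r ≤ t → ∀ p : Fin r → Fin m, Function.Injective p →
      ∀ v : Fin r → ℝ, (∀ s, v s = 1 / Real.sqrt m ∨ v s = -(1 / Real.sqrt m)) →
      (((univ : Finset (Fin N)).filter fun j => ∀ s, Φ (p s) j = v s).card) * 2 ^ r = N)
    (l : ℕ) (hl2 : 2 ≤ l) (hlt : l ≤ t) (hleven : Even l)
    (δ ε : ℝ) (hδ : 0 < δ) (hε0 : 0 < ε)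
    (hm : (3 / 4 : ℝ) * l * ((k : ℝ) / δ) ^ 2 * ((k : ℝ) / ε) ^ ((2 : ℝ) / l) ≤ m) :
    StRIP Φ k δ ε := by
  rcases k.eq_zero_or_pos with rfl | hk
  · exact stRIP_zero Φ hδ.le hε0.le
  obtain ⟨n, rfl⟩ := hleven.two_dvd
  have hn : 0 < n := by omega
  have hm0 : 0 < m := by exact_mod_cast (rowsBound_pos (by omega) hk hδ hε0).trans_le hm
  have hΦ : HasSignEntries Φ := hentries
  refine (one_sub_mul_card_le_card_filter_lt (g := fun I => ∑ i ∈ I, gramRadius Φ I i ^ (2 * n))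
    _ (fun I _ => sum_nonneg fun i _ => pow_nonneg (gramRadius_nonneg Φ I i) _)
    (pow_pos hδ (2 * n)) ?_).trans ?_
  · calc _ ≤ N.choose k * ((k : ℝ) ^ (2 * n + 1) * n ^ n / m ^ n) :=
          IsOrthArray.sum_powersetCard_sum_gramRadius_pow_le hOA hΦ hm0 hn hlt k
      _ ≤ N.choose k * (ε * δ ^ (2 * n)) := by
          gcongr; exact pow_mul_pow_div_pow_le_of_rowsBound_le hn hk hδ hε0 hm
      _ = _ := by rw [card_powersetCard, card_univ, Fintype.card_fin]; ring
  · exact_mod_cast card_le_card <| monotone_filter_right _ fun I _ hI =>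
      specNorm_gram_sub_one_le_of_sum_pow_lt (hΦ.unitCols hm0) hδ.le (by omega) hI

/-- Theorem: StRIP matrices from orthogonal arrays. -/
theorem stmt17 (m N k t : ℕ)
    (Φ : Matrix (Fin m) (Fin N) ℝ)
    -- the columns have entries `±1/√m`
    (hentries : ∀ r j, Φ r j = 1 / Real.sqrt m ∨ Φ r j = -(1 / Real.sqrt m))
    -- the columns form an orthogonal array of strength `t`: for every `r ≤ t`
    -- coordinate positions, the projection of a uniformly random column onto those
    -- positions is uniform on `{±1/√m}^r`
    (hOA : ∀ r : ℕ, r ≤ t → ∀ p : Fin r → Fin m, Function.Injective p →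
      ∀ v : Fin r → ℝ, (∀ s, v s = 1 / Real.sqrt m ∨ v s = -(1 / Real.sqrt m)) →
      (((univ : Finset (Fin N)).filter fun j => ∀ s, Φ (p s) j = v s).card) * 2 ^ r = N)
    (l : ℕ) (hl2 : 2 ≤ l) (hlt : l ≤ t) (hleven : Even l)
    (δ ε : ℝ) (hδ : 0 < δ) (hε0 : 0 < ε) (hε1 : ε < 1)
    (hm : (3 / 4 : ℝ) * l * ((k : ℝ) / δ) ^ 2 * ((k : ℝ) / ε) ^ ((2 : ℝ) / l) ≤ m) :
    StRIP Φ k δ ε :=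
  stmt17_general m N k t Φ hentries hOA l hl2 hlt hleven δ ε hδ hε0 hm
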